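/- Let Ω be a domain in ℂ^n containing the origin 0, let t > -n be a real number, and let φ be a plurisubharmonic function on Ω such that a := c_t(φ) < +∞. Then for every real s ≥ t, one has a = c_s(φ + ((s-t)/a)·log‖z‖), where φ + ((s-t)/a)·log‖z‖ is the plurisubharmonic function z ↦ φ(z) + ((s-t)/a)·log‖z‖ on Ω. -/

import Mathlib

open MeasureTheory Filter Metric Topology Complex
open scoped ENNReal EReal

noncomputable section

/-- `ℂ^n` with its Euclidean (Hermitian) norm. -/
abbrev Cn (n : ℕ) : Type := EuclideanSpace ℂ (Fin n)

/-- Lebesgue measure on `ℂ^n ≅ ℝ^{2n}`. -/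
instance Cn.measureSpace (n : ℕ) : MeasureSpace (Cn n) :=
  { volume := Measure.map (MeasurableEquiv.toLp 2 (Fin n → ℂ)) (volume : Measure (Fin n → ℂ)) }

/-- Extended-real-valued logarithm, sending `0` (and negative numbers) to `-∞`. -/
def elog (x : ℝ) : EReal := if x ≤ 0 then (⊥ : EReal) else ((Real.log x : ℝ) : EReal)

/-- `exp : EReal → ℝ≥0∞`, with `exp (-∞) = 0` and `exp (+∞) = +∞`. -/
def erealExp (x : EReal) : ℝ≥0∞ :=
  if x = ⊤ then ⊤ else if x = ⊥ then 0 else ENNReal.ofReal (Real.exp x.toReal)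

/-- The positive part of an extended real number, as an element of `ℝ≥0∞`. -/
def erealPosPart (x : EReal) : ℝ≥0∞ := if x = ⊤ then ⊤ else ENNReal.ofReal x.toReal

/-- The integral of an `EReal`-valued function: upper integral of the positive part minus the
upper integral of the negative part. -/
def erealIntegral {α : Type*} [MeasurableSpace α] (μ : Measure α) (f : α → EReal) : EReal :=
  ((∫⁻ a, erealPosPart (f a) ∂μ : ℝ≥0∞) : EReal) -
    ((∫⁻ a, erealPosPart (-(f a)) ∂μ : ℝ≥0∞) : EReal)

/-- A function `f : ℂ → [-∞, ∞)` is subharmonic on an open set `U ⊆ ℂ` if it is upper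
semicontinuous on `U` and satisfies the sub-mean value inequality on circles contained in `U`
(written in the form `2π · f(z) ≤ ∫_0^{2π} f(z + r e^{iθ}) dθ`). -/
def SubhOn (f : ℂ → EReal) (U : Set ℂ) : Prop :=
  UpperSemicontinuousOn f U ∧
  ∀ z ∈ U, ∀ r : ℝ, 0 < r → closedBall z r ⊆ U →
    ((2 * Real.pi : ℝ) : EReal) * f z ≤
      erealIntegral (volume.restrict (Set.Ioc (0:ℝ) (2 * Real.pi)))
        (fun θ : ℝ => f (z + (r : ℂ) * Complex.exp (θ * Complex.I)))

/-- A function `φ : ℂ^n → [-∞, ∞)` is plurisubharmonic on `Ω` if it is upper semicontinuous on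
`Ω`, not identically `-∞`, never `+∞`, and its restriction to every complex line is subharmonic. -/
def PshOn {n : ℕ} (φ : Cn n → EReal) (Ω : Set (Cn n)) : Prop :=
  UpperSemicontinuousOn φ Ω ∧ (∃ z ∈ Ω, φ z ≠ ⊥) ∧ (∀ z ∈ Ω, φ z ≠ ⊤) ∧
  ∀ a v : Cn n, SubhOn (fun w : ℂ => φ (a + w • v)) {w : ℂ | a + w • v ∈ Ω}

/-- A domain in `ℂ^n`: a nonempty connected open set. -/
def IsCnDomain {n : ℕ} (Ω : Set (Cn n)) : Prop := IsOpen Ω ∧ IsConnected Ω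

/-- The Lelong number of `φ` at the origin: `ν_φ(0) = liminf_{z → 0} φ(z) / log ‖z‖`. -/
def lelong {n : ℕ} (φ : Cn n → EReal) : EReal :=
  liminf (fun z : Cn n => φ z * (((Real.log ‖z‖)⁻¹ : ℝ) : EReal)) (𝓝[≠] (0 : Cn n))

/-- The Lelong number at `0` of the restriction of `φ` to the complex line through `0` with
direction `v`: `ν_{φ|_l}(0) = liminf_{λ → 0} φ(λ v) / log |λ|`. -/
def lelongLine {n : ℕ} (φ : Cn n → EReal) (v : Cn n) : EReal :=
  liminf (fun w : ℂ => φ (w • v) * (((Real.log ‖w‖)⁻¹ : ℝ) : EReal)) (𝓝[≠] (0 : ℂ))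

/-- `‖z‖^{2t} e^{-2cφ}` is (Lebesgue) integrable on some neighborhood of the origin. -/
def lctIntegrable {n : ℕ} (t c : ℝ) (φ : Cn n → EReal) : Prop :=
  ∃ U ∈ 𝓝 (0 : Cn n),
    (∫⁻ z in U, ENNReal.ofReal (‖z‖ ^ (2 * t)) *
        erealExp (((-(2 * c) : ℝ) : EReal) * φ z) ∂volume) < ⊤

/-- The weighted log canonical threshold
`c_t(φ) = sup {c ≥ 0 : ‖z‖^{2t} e^{-2cφ}` is integrable near `0}`, as an element of `[0, ∞]`. -/
def lct {n : ℕ} (t : ℝ) (φ : Cn n → EReal) : ℝ≥0∞ :=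
  ⨆ c ∈ {c : ℝ | 0 ≤ c ∧ lctIntegrable t c φ}, ENNReal.ofReal c

/-!
Off the origin, `‖z‖^{2s} e^{-2c(φ + b log‖z‖)} = ‖z‖^{2(s - cb)} e^{-2cφ}`, so `c` is admissible
for `(s, φ + b log‖z‖)` (the weighted density is integrable near `0`) exactly when it is
admissible for `(s - cb, φ)`; and since `‖z‖ ≤ 1` near `0`, admissibility for one weight exponent
persists for every larger one. With `b = (s - t)/a`
one has `s - cb ≥ t` iff `c ≤ a`, which gives both inequalities.

When `a = 0` the division gives `b = 0`, and one needs `c_s(φ) = 0`. Weighted AM-GM gives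
`‖z‖^{2t} e^{-2θcφ} ≤ ‖z‖^{2s} e^{-2cφ} + ‖z‖^{2u}` for `t = θs + (1-θ)u` with `θ ∈ (0, 1]` and
`u > -n`, and `‖z‖^{2u}` is integrable near `0`, so a positive threshold at `s` yields a positive
threshold at `t`.
-/

@[simp] lemma erealExp_coe (x : ℝ) : erealExp x = ENNReal.ofReal (Real.exp x) := by
  simp [erealExp]

@[simp] lemma erealExp_top : erealExp ⊤ = ⊤ := by simp [erealExp]

@[simp] lemma erealExp_bot : erealExp ⊥ = 0 := by simp [erealExp]

lemma elog_of_pos {x : ℝ} (hx : 0 < x) : elog x = Real.log x :=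
  if_neg hx.not_ge

lemma erealExp_coe_mul_add_coe (a y : ℝ) (x : EReal) :
    erealExp (a * (x + y)) = erealExp (a * x) * ENNReal.ofReal (Real.exp (a * y)) := by
  induction x with
  | bot =>
    rcases lt_trichotomy a 0 with ha | rfl | ha
    · simp [EReal.coe_mul_bot_of_neg ha, ENNReal.top_mul, Real.exp_pos]
    · simp
    · simp [EReal.coe_mul_bot_of_pos ha]
  | top =>
    rcases lt_trichotomy a 0 with ha | rfl | ha
    · simp [EReal.coe_mul_top_of_neg ha]
    · simp
    · simp [EReal.coe_mul_top_of_pos ha, ENNReal.top_mul, Real.exp_pos]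
  | coe x =>
    rw [← EReal.coe_add, ← EReal.coe_mul, ← EReal.coe_mul, erealExp_coe, erealExp_coe,
      ← ENNReal.ofReal_mul (Real.exp_nonneg _), ← Real.exp_add, mul_add]

lemma erealExp_coe_mul_eq_rpow {θ : ℝ} (hθ : 0 < θ) (x : EReal) :
    erealExp (θ * x) = erealExp x ^ θ := by
  induction x with
  | bot => simp [EReal.coe_mul_bot_of_pos hθ, ENNReal.zero_rpow_of_pos hθ]
  | top => simp [EReal.coe_mul_top_of_pos hθ, ENNReal.top_rpow_of_pos hθ]
  | coe x =>
    rw [← EReal.coe_mul, erealExp_coe, erealExp_coe, ENNReal.ofReal_rpow_of_nonneg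
      (Real.exp_nonneg _) hθ.le, ← Real.exp_mul, mul_comm]

lemma ENNReal.rpow_mul_rpow_one_sub_le_add (x y : ℝ≥0∞) {θ : ℝ} (hθ₀ : 0 ≤ θ) (hθ₁ : θ ≤ 1) :
    x ^ θ * y ^ (1 - θ) ≤ x + y :=
  calc x ^ θ * y ^ (1 - θ) ≤ max x y ^ θ * max x y ^ (1 - θ) := by
        have : 0 ≤ 1 - θ := sub_nonneg.2 hθ₁
        gcongr
        exacts [le_max_left x y, le_max_right x y]
    _ = max x y := by
        rw [← ENNReal.rpow_add_of_nonneg _ _ hθ₀ (sub_nonneg.2 hθ₁), add_sub_cancel,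
          ENNReal.rpow_one]
    _ ≤ x + y := max_le_add_of_nonneg bot_le bot_le

section LIntegrableNear

variable {α : Type*} [TopologicalSpace α] [MeasurableSpace α]

def LIntegrableNear (μ : Measure α) (x : α) (f : α → ℝ≥0∞) : Prop :=
  ∃ U ∈ 𝓝 x, ∫⁻ z in U, f z ∂μ < ⊤

variable {μ : Measure α} {x : α} {f g : α → ℝ≥0∞}

lemma LIntegrableNear.mono_punctured [OpensMeasurableSpace α] (hg : LIntegrableNear μ x g)
    (hx : μ {x} = 0) (hfg : ∀ᶠ z in 𝓝[≠] x, f z ≤ g z) : LIntegrableNear μ x f := by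
  obtain ⟨U, hU, hgU⟩ := hg
  obtain ⟨V, hfgV, hV, hxV⟩ := eventually_nhds_iff.1 (eventually_nhdsWithin_iff.1 hfg)
  have hae : ∀ᵐ z ∂μ.restrict V, f z ≤ g z := by
    filter_upwards [ae_restrict_of_ae (compl_mem_ae_iff.2 hx), ae_restrict_mem hV.measurableSet]
      with z hzx hzV
    exact hfgV z hzV hzx
  refine ⟨U ∩ V, Filter.inter_mem hU (hV.mem_nhds hxV), ?_⟩
  calc ∫⁻ z in U ∩ V, f z ∂μ ≤ ∫⁻ z in U ∩ V, g z ∂μ :=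
        lintegral_mono_ae (ae_restrict_of_ae_restrict_of_subset Set.inter_subset_right hae)
    _ ≤ ∫⁻ z in U, g z ∂μ := lintegral_mono_set Set.inter_subset_left
    _ < ⊤ := hgU

lemma LIntegrableNear.add (hf : LIntegrableNear μ x f) (hg : LIntegrableNear μ x g)
    (hgm : AEMeasurable g μ) : LIntegrableNear μ x (f + g) := by
  obtain ⟨U, hU, hfU⟩ := hf
  obtain ⟨V, hV, hgV⟩ := hg
  refine ⟨U ∩ V, Filter.inter_mem hU hV, ?_⟩
  rw [Pi.add_def, lintegral_add_right' _ hgm.restrict]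
  exact ENNReal.add_lt_top.2
    ⟨(lintegral_mono_set Set.inter_subset_left).trans_lt hfU,
      (lintegral_mono_set Set.inter_subset_right).trans_lt hgV⟩

end LIntegrableNear

lemma lintegrableNear_rpow_norm {E : Type*} [NormedAddCommGroup E] [NormedSpace ℝ E]
    [FiniteDimensional ℝ E] [MeasurableSpace E] [BorelSpace E] (μ : Measure E)
    [μ.IsAddHaarMeasure] (hd : 1 ≤ Module.finrank ℝ E) {p : ℝ}
    (hp : -(Module.finrank ℝ E : ℝ) < p) :
    LIntegrableNear μ 0 (fun z => ENNReal.ofReal (‖z‖ ^ p)) := by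
  have hint : IntegrableOn (fun z : E => ‖z‖ ^ p) (ball 0 1) μ :=
    integrableOn_ball_of_norm_le_rpow (C := 1) (α := -p) hd (by linarith)
      (Eventually.of_forall fun z => by simp [Real.abs_rpow_of_nonneg (norm_nonneg z)])
      (measurable_norm.pow_const p).aestronglyMeasurable
  exact ⟨ball 0 1, ball_mem_nhds 0 one_pos, hint.setLIntegral_lt_top⟩

instance Cn.isAddHaarMeasure (n : ℕ) : (volume : Measure (Cn n)).IsAddHaarMeasure :=
  (PiLp.continuousLinearEquiv 2 ℂ (fun _ : Fin n => ℂ)).symm.isAddHaarMeasure_map _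

lemma Cn.finrank_real (n : ℕ) : Module.finrank ℝ (Cn n) = 2 * n := by
  rw [← Module.finrank_mul_finrank ℝ ℂ (Cn n), Complex.finrank_real_complex,
    finrank_euclideanSpace_fin]

lemma Cn.volume_singleton {n : ℕ} (hn : 0 < n) (z : Cn n) : volume {z} = 0 := by
  have : Nonempty (Fin n) := ⟨⟨0, hn⟩⟩
  exact measure_singleton z

lemma Cn.lintegrableNear_rpow_norm {n : ℕ} (hn : 0 < n) {p : ℝ} (hp : -(2 * n : ℝ) < p) :
    LIntegrableNear volume 0 (fun z : Cn n => ENNReal.ofReal (‖z‖ ^ p)) :=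
  _root_.lintegrableNear_rpow_norm volume (by rw [Cn.finrank_real]; omega)
    (by rw [Cn.finrank_real]; push_cast; exact hp)

section Threshold

variable {n : ℕ} {φ : Cn n → EReal}

/-- `lctIntegrable t c φ` unfolds to `LIntegrableNear volume 0 (lctIntegrand t c φ)`. -/
def lctIntegrand (t c : ℝ) (φ : Cn n → EReal) (z : Cn n) : ℝ≥0∞ :=
  ENNReal.ofReal (‖z‖ ^ (2 * t)) * erealExp (((-(2 * c) : ℝ) : EReal) * φ z)

lemma lctIntegrand_antitone_weight {t t' c : ℝ} (htt' : t ≤ t') {z : Cn n} (hz : z ≠ 0)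
    (hz₁ : ‖z‖ ≤ 1) : lctIntegrand t' c φ z ≤ lctIntegrand t c φ z := by
  unfold lctIntegrand
  gcongr ENNReal.ofReal ?_ * _
  exact Real.rpow_le_rpow_of_exponent_ge (norm_pos_iff.2 hz) hz₁ (by linarith)

lemma lctIntegrand_add_mul_elog (s c b : ℝ) {z : Cn n} (hz : z ≠ 0) :
    lctIntegrand s c (fun z => φ z + (b : EReal) * elog ‖z‖) z =
      lctIntegrand (s - c * b) c φ z := by
  have hr : 0 < ‖z‖ := norm_pos_iff.2 hz
  have hweight : ‖z‖ ^ (2 * s) * Real.exp (-(2 * c) * (b * Real.log ‖z‖)) =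
      ‖z‖ ^ (2 * (s - c * b)) := by
    rw [show -(2 * c) * (b * Real.log ‖z‖) = Real.log ‖z‖ * (-(2 * c * b)) by ring,
      ← Real.rpow_def_of_pos hr, ← Real.rpow_add hr]
    ring_nf
  rw [lctIntegrand, lctIntegrand, elog_of_pos hr, ← EReal.coe_mul, erealExp_coe_mul_add_coe,
    mul_left_comm, ← ENNReal.ofReal_mul (by positivity), hweight, mul_comm]

lemma lctIntegrand_mul_eq_rpow_mul_rpow {s t u c θ : ℝ} (hθ : 0 < θ)
    (hstu : t = θ * s + (1 - θ) * u) {z : Cn n} (hz : z ≠ 0) :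
    lctIntegrand t (θ * c) φ z =
      lctIntegrand s c φ z ^ θ * ENNReal.ofReal (‖z‖ ^ (2 * u)) ^ (1 - θ) := by
  have hr : 0 < ‖z‖ := norm_pos_iff.2 hz
  have hweight : ‖z‖ ^ (2 * t) = (‖z‖ ^ (2 * s)) ^ θ * (‖z‖ ^ (2 * u)) ^ (1 - θ) := by
    rw [← Real.rpow_mul hr.le, ← Real.rpow_mul hr.le, ← Real.rpow_add hr, hstu]
    ring_nf
  rw [lctIntegrand, lctIntegrand, show -(2 * (θ * c)) = θ * -(2 * c) by ring, EReal.coe_mul,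
    mul_assoc, erealExp_coe_mul_eq_rpow hθ, ENNReal.mul_rpow_of_nonneg _ _ hθ.le,
    ENNReal.ofReal_rpow_of_pos (by positivity), ENNReal.ofReal_rpow_of_pos (by positivity),
    hweight, ENNReal.ofReal_mul (by positivity)]
  ring

lemma lctIntegrable_of_le_weight (hn : 0 < n) {t t' c : ℝ} (htt' : t ≤ t')
    (h : lctIntegrable t c φ) : lctIntegrable t' c φ := by
  refine LIntegrableNear.mono_punctured h (Cn.volume_singleton hn 0) ?_
  filter_upwards [self_mem_nhdsWithin,
    nhdsWithin_le_nhds (closedBall_mem_nhds (0 : Cn n) one_pos)] with z hz hz₁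
  exact lctIntegrand_antitone_weight htt' hz (mem_closedBall_zero_iff.1 hz₁)

lemma lctIntegrable_add_mul_elog_iff (hn : 0 < n) (s c b : ℝ) :
    lctIntegrable s c (fun z => φ z + (b : EReal) * elog ‖z‖) ↔
      lctIntegrable (s - c * b) c φ := by
  have h : ∀ᶠ z in 𝓝[≠] (0 : Cn n),
      lctIntegrand s c (fun z => φ z + (b : EReal) * elog ‖z‖) z =
        lctIntegrand (s - c * b) c φ z :=
    eventually_mem_nhdsWithin.mono fun z hz => lctIntegrand_add_mul_elog s c b hz
  exact ⟨fun hψ => LIntegrableNear.mono_punctured hψ (Cn.volume_singleton hn 0)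
      (h.mono fun _ hz => hz.ge),
    fun hφ => LIntegrableNear.mono_punctured hφ (Cn.volume_singleton hn 0)
      (h.mono fun _ hz => hz.le)⟩

lemma lctIntegrable_mul_of_eq_convexComb (hn : 0 < n) {s t u c θ : ℝ} (hθ₀ : 0 < θ)
    (hθ₁ : θ ≤ 1) (hu : -(n : ℝ) < u) (hstu : t = θ * s + (1 - θ) * u)
    (h : lctIntegrable s c φ) : lctIntegrable t (θ * c) φ := by
  have hsum : LIntegrableNear volume 0
      (lctIntegrand s c φ + fun z => ENNReal.ofReal (‖z‖ ^ (2 * u))) :=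
    LIntegrableNear.add h (Cn.lintegrableNear_rpow_norm hn (by linarith))
      (measurable_norm.pow_const _).ennreal_ofReal.aemeasurable
  refine LIntegrableNear.mono_punctured (f := lctIntegrand t (θ * c) φ) hsum
    (Cn.volume_singleton hn 0) ?_
  filter_upwards [self_mem_nhdsWithin] with z hz
  rw [lctIntegrand_mul_eq_rpow_mul_rpow hθ₀ hstu hz]
  exact ENNReal.rpow_mul_rpow_one_sub_le_add _ _ hθ₀.le hθ₁

lemma ofReal_le_lct {t c : ℝ} (hc : 0 ≤ c) (h : lctIntegrable t c φ) :
    ENNReal.ofReal c ≤ lct t φ :=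
  le_iSup₂ (f := fun c (_ : c ∈ {c : ℝ | 0 ≤ c ∧ lctIntegrable t c φ}) => ENNReal.ofReal c)
    c ⟨hc, h⟩

lemma le_toReal_lct {t c : ℝ} (hfin : lct t φ ≠ ⊤) (hc : 0 ≤ c) (h : lctIntegrable t c φ) :
    c ≤ (lct t φ).toReal :=
  (ENNReal.ofReal_le_iff_le_toReal hfin).1 (ofReal_le_lct hc h)

lemma lct_le {t : ℝ} {m : ℝ≥0∞} (H : ∀ c, 0 ≤ c → lctIntegrable t c φ → ENNReal.ofReal c ≤ m) :
    lct t φ ≤ m :=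
  iSup₂_le fun c hc => H c hc.1 hc.2

lemma lct_add_mul_elog_le (hn : 0 < n) {s t b : ℝ} (hb : 0 ≤ b)
    (h : s - t ≤ (lct t φ).toReal * b) :
    lct s (fun z => φ z + (b : EReal) * elog ‖z‖) ≤ lct t φ := by
  refine lct_le fun c hc hψ => ?_
  by_contra! hlt
  have hac : (lct t φ).toReal * b ≤ c * b :=
    mul_le_mul_of_nonneg_right (ENNReal.toReal_le_of_le_ofReal hc hlt.le) hb
  have hφ : lctIntegrable t c φ :=
    lctIntegrable_of_le_weight hn (by linarith) ((lctIntegrable_add_mul_elog_iff hn s c b).1 hψ)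
  exact hlt.not_ge (ofReal_le_lct hc hφ)

lemma le_lct_add_mul_elog (hn : 0 < n) {s t b : ℝ} (hb : 0 ≤ b) (hfin : lct t φ ≠ ⊤)
    (h : (lct t φ).toReal * b ≤ s - t) :
    lct t φ ≤ lct s (fun z => φ z + (b : EReal) * elog ‖z‖) := by
  refine lct_le fun c hc hφ => ofReal_le_lct hc ?_
  have hca : c * b ≤ (lct t φ).toReal * b :=
    mul_le_mul_of_nonneg_right (le_toReal_lct hfin hc hφ) hb
  exact (lctIntegrable_add_mul_elog_iff hn s c b).2 (lctIntegrable_of_le_weight hn (by linarith) hφ)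

lemma lct_pos_of_lct_pos (hn : 0 < n) {s t : ℝ} (ht : -(n : ℝ) < t) (hts : t ≤ s)
    (h : 0 < lct s φ) : 0 < lct t φ := by
  obtain ⟨c, ⟨hc, hcs⟩, hc₀⟩ := lt_biSup_iff.1 h
  have hc : 0 < c := ENNReal.ofReal_pos.1 hc₀
  set θ := (t + n) / (2 * s + n - t)
  have hθ₀ : 0 < θ := div_pos (by linarith) (by linarith)
  have hθ₁ : θ ≤ 1 := div_le_one_of_le₀ (by linarith) (by linarith)
  have hstu : t = θ * s + (1 - θ) * ((t - n) / 2) := by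
    have : 2 * s + n - t ≠ 0 := by linarith
    simp only [θ]
    field_simp
    ring
  exact (ENNReal.ofReal_pos.2 (mul_pos hθ₀ hc)).trans_le <| ofReal_le_lct (by positivity)
    (lctIntegrable_mul_of_eq_convexComb hn hθ₀ hθ₁ (by linarith) hstu hcs)

end Threshold

theorem statement5_general {n : ℕ} (hn : 0 < n) (t : ℝ) (ht : -(n : ℝ) < t)
    (φ : Cn n → EReal) (hfin : lct t φ < ⊤) :
    ∀ s : ℝ, t ≤ s →
      lct s (fun z : Cn n =>
        φ z + (((s - t) / (lct t φ).toReal : ℝ) : EReal) * elog ‖z‖) = lct t φ := by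
  intro s hts
  rcases (ENNReal.toReal_nonneg (a := lct t φ)).eq_or_lt with ha | ha
  · have hzero : lct t φ = 0 := (ENNReal.toReal_eq_zero_iff _).1 ha.symm |>.resolve_right hfin.ne
    simp only [← ha, div_zero, EReal.coe_zero, zero_mul, add_zero]
    rw [hzero]
    by_contra h
    exact (lct_pos_of_lct_pos hn ht hts (pos_iff_ne_zero.2 h)).ne' hzero
  · have hab : (lct t φ).toReal * ((s - t) / (lct t φ).toReal) = s - t :=
      mul_div_cancel₀ _ ha.ne'
    have hb : 0 ≤ (s - t) / (lct t φ).toReal := div_nonneg (by linarith) ha.le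
    exact le_antisymm (lct_add_mul_elog_le hn hb hab.ge) (le_lct_add_mul_elog hn hb hfin.ne hab.le)

/-- If `a := c_t(φ) < +∞`, then for every `s ≥ t` one has
`a = c_s(φ + ((s-t)/a)·log‖z‖)`. -/
theorem statement5 {n : ℕ} (hn : 0 < n) (Ω : Set (Cn n)) (hΩ : IsCnDomain Ω)
    (h0 : (0 : Cn n) ∈ Ω) (t : ℝ) (ht : -(n : ℝ) < t)
    (φ : Cn n → EReal) (hφ : PshOn φ Ω) (hfin : lct t φ < ⊤) :
    ∀ s : ℝ, t ≤ s →
      lct s (fun z : Cn n =>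
        φ z + (((s - t) / (lct t φ).toReal : ℝ) : EReal) * elog ‖z‖) = lct t φ :=
  statement5_general hn t ht φ hfin

end
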